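/- Let S be a finite nonempty set of sites in a metric space, k > 0 with k ≤ |S|, and for a finite nonempty set C′ define radius C′ = Max {distance C′ s | s ∈ S} where distance C′ s = Min {dist s c | c ∈ C′}. Define invar C = (C ≠ ∅ ∧ |C| ≤ k ∧ C ⊆ S ∧ for every finite nonempty C′, either 2·radius C′ < dist c₁ c₂ for all distinct c₁, c₂ ∈ C, or distance C s ≤ 2·radius C′ for all s ∈ S). If invar C holds, |C| < k, and s ∈ S is a site with distance C s = Max {distance C s′ | s′ ∈ S} (a furthest site from C), then invar (C ∪ {s}) holds. -/

import Mathlib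

/-- The distance from a point `s` to the nearest center in `C`
(the minimum of `dist s c` over `c ∈ C`, for `C` finite and nonempty). -/
noncomputable def distanceTo {α : Type*} [MetricSpace α] (C : Set α) (s : α) : ℝ :=
  sInf ((fun c => dist s c) '' C)

/-- The radius of a set of centers `C'` w.r.t. the sites `S`
(the maximum over `s ∈ S` of the distance from `s` to `C'`). -/
noncomputable def radius {α : Type*} [MetricSpace α] (S C' : Set α) : ℝ :=
  sSup ((fun s => distanceTo C' s) '' S)

/-- The loop invariant of the greedy center selection algorithm. -/
def invar {α : Type*} [MetricSpace α] (S : Set α) (k : ℕ) (C : Set α) : Prop :=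
  C ≠ ∅ ∧ C.ncard ≤ k ∧ C ⊆ S ∧
    ∀ C' : Set α, C'.Finite → C' ≠ ∅ →
      ((∀ c₁ ∈ C, ∀ c₂ ∈ C, c₁ ≠ c₂ → 2 * radius S C' < dist c₁ c₂) ∨
       (∀ s ∈ S, distanceTo C s ≤ 2 * radius S C'))

/-! Let `r = radius S C'`. If `2 r < d(s, C)`, the centers of `C` must be pairwise
`2 r`-separated (otherwise `d(s, C) ≤ 2 r`), and `s` is more than `2 r` away from each of them.
Otherwise every site is within `d(s, C) ≤ 2 r` of `C`, since `s` is the furthest one, and a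
fortiori of `C ∪ {s}`. -/

section DistanceTo

variable {α : Type*} [MetricSpace α]

lemma bddBelow_image_dist (C : Set α) (t : α) : BddBelow ((fun c => dist t c) '' C) :=
  ⟨0, by rintro _ ⟨c, _, rfl⟩; exact dist_nonneg⟩

lemma distanceTo_le_dist {C : Set α} {c : α} (hc : c ∈ C) (t : α) :
    distanceTo C t ≤ dist t c :=
  csInf_le (bddBelow_image_dist C t) ⟨c, hc, rfl⟩

lemma distanceTo_anti {C D : Set α} (hC : C.Nonempty) (hCD : C ⊆ D) (t : α) :
    distanceTo D t ≤ distanceTo C t :=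
  csInf_le_csInf (bddBelow_image_dist D t) (hC.image _) (Set.image_mono hCD)

lemma distanceTo_le_of_eq_sSup {S C : Set α} (hS : S.Finite) {s t : α}
    (hfar : distanceTo C s = sSup ((fun s' => distanceTo C s') '' S)) (ht : t ∈ S) :
    distanceTo C t ≤ distanceTo C s :=
  hfar ▸ le_csSup (hS.image _).bddAbove ⟨t, ht, rfl⟩

lemma Set.Pairwise.insert_of_lt_distanceTo {C : Set α} {r : ℝ} {s : α}
    (hC : C.Pairwise fun a b => r < dist a b) (hs : r < distanceTo C s) :
    (insert s C).Pairwise fun a b => r < dist a b :=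
  hC.insert fun c hc _ =>
    have hsc : r < dist s c := hs.trans_le (distanceTo_le_dist hc s)
    ⟨hsc, dist_comm s c ▸ hsc⟩

end DistanceTo

theorem stmt_16_general {α : Type*} [MetricSpace α] (S : Set α)
    (hSfin : S.Finite)
    (k : ℕ)
    (C : Set α) (hinv : invar S k C) (hCk : C.ncard < k)
    (s : α) (hs : s ∈ S)
    (hfar : distanceTo C s = sSup ((fun s' => distanceTo C s') '' S)) :
    invar S k (C ∪ {s}) := by
  obtain ⟨hCne, -, hCS, hsep⟩ := hinv
  have hC : C.Nonempty := Set.nonempty_iff_ne_empty.mpr hCne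
  refine ⟨(hC.mono Set.subset_union_left).ne_empty, ?_,
    Set.union_subset hCS (Set.singleton_subset_iff.mpr hs), fun C' hC'fin hC'ne => ?_⟩
  · rw [Set.union_singleton]
    exact (Set.ncard_insert_le s C).trans hCk
  by_cases hlt : 2 * radius S C' < distanceTo C s
  · rcases hsep C' hC'fin hC'ne with hpair | hcover
    · left
      rw [Set.union_singleton]
      exact Set.Pairwise.insert_of_lt_distanceTo hpair hlt
    · exact absurd (hcover s hs) hlt.not_ge
  · right
    intro t ht
    calc distanceTo (C ∪ {s}) t ≤ distanceTo C t := distanceTo_anti hC Set.subset_union_left t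
      _ ≤ distanceTo C s := distanceTo_le_of_eq_sSup hSfin hfar ht
      _ ≤ 2 * radius S C' := not_lt.mp hlt

theorem stmt_16 {α : Type*} [MetricSpace α] (S : Set α)
    (hSfin : S.Finite) (hSne : S.Nonempty)
    (k : ℕ) (hk : 0 < k) (hkS : k ≤ S.ncard)
    (C : Set α) (hinv : invar S k C) (hCk : C.ncard < k)
    (s : α) (hs : s ∈ S)
    (hfar : distanceTo C s = sSup ((fun s' => distanceTo C s') '' S)) :
    invar S k (C ∪ {s}) :=
  stmt_16_general S hSfin k C hinv hCk s hs hfar
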